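/- Let f₁, ..., fₙ: ℝ^d → ℝ ∪ {+∞} be proper, closed and convex, and suppose there exists x⋆ minimizing every fᵢ simultaneously (interpolation regime). Then for any 0 < γ < ∞, the function f = (1/n)∑ᵢ fᵢ and M^γ = (1/n)∑ᵢ M_{fᵢ}^γ have the same set of minimizers and the same minimum value. -/

import Mathlib

/-!
Let `m i` be the value of `f i` at the common minimizer `x⋆`. Both `f i` and its Moreau envelope
are bounded below by `m i` and equal to it at `x⋆`, so each of the two averages attains the
minimum `(1/n) ∑ m i`, exactly at the points where every summand equals its `m i`. It remains to
see that `M_{f i}^γ x = m i` forces `f i x = m i`: if `f i x > m i`, lower semicontinuity keeps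
`f i` above some `y > m i` near `x`, while far from `x` the quadratic penalty is bounded away from
zero, so the envelope at `x` exceeds `m i`.
-/

/-- The Moreau envelope of an extended-real-valued function `f` with parameter `γ`. -/
noncomputable def moreauE {d : ℕ} (γ : ℝ) (f : EuclideanSpace ℝ (Fin d) → EReal)
    (x : EuclideanSpace ℝ (Fin d)) : EReal :=
  ⨅ z, (f z + (((1 / (2 * γ)) * ‖z - x‖ ^ 2 : ℝ) : EReal))

open Finset

namespace EReal

lemma coe_mul_le_coe_mul_iff {r : ℝ} (hr : 0 < r) {a b : EReal} :
    (r : EReal) * a ≤ r * b ↔ a ≤ b := by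
  refine ⟨fun h => ?_, fun h => mul_le_mul_of_nonneg_left h (EReal.coe_nonneg.2 hr.le)⟩
  have h' := mul_le_mul_of_nonneg_left h (EReal.coe_nonneg.2 (inv_nonneg.2 hr.le))
  rwa [← mul_assoc, ← mul_assoc, ← coe_mul, inv_mul_cancel₀ hr.ne', coe_one, one_mul,
    one_mul] at h'

lemma coe_finset_sum {ι : Type*} (s : Finset ι) (g : ι → ℝ) :
    ((∑ i ∈ s, g i : ℝ) : EReal) = ∑ i ∈ s, (g i : EReal) :=
  map_sum (⟨⟨Real.toEReal, coe_zero⟩, coe_add⟩ : ℝ →+ EReal) g s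

lemma eq_coe_of_sum_le_sum_coe {ι : Type*} [Fintype ι] {g : ι → EReal} {m : ι → ℝ}
    (hle : ∀ i, (m i : EReal) ≤ g i) (hsum : ∑ i, g i ≤ ∑ i, (m i : EReal)) (j : ι) :
    g j = m j := by
  classical
  refine le_antisymm ?_ (hle j)
  by_contra! hj
  set S : ℝ := ∑ i ∈ univ.erase j, m i
  have hm : ∑ i, (m i : EReal) = m j + S := by
    rw [coe_finset_sum, (add_sum_erase _ _ (mem_univ j)).symm]
  have hg : g j + S ≤ ∑ i, g i := by
    rw [coe_finset_sum, ← add_sum_erase _ g (mem_univ j)]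
    exact add_le_add_right (sum_le_sum fun i _ => hle i) _
  exact (hsum.trans_lt (hm ▸ add_lt_add_right_coe hj S)).not_ge hg

end EReal

section CommonMinimizer

variable {α ι : Type*} [Fintype ι] {g : ι → α → EReal} {m : ι → ℝ} {c : ℝ} {xs : α}

lemma setOf_forall_coe_mul_sum_le_eq (hc : 0 < c) (hm : ∀ i z, (m i : EReal) ≤ g i z)
    (hxs : ∀ i, g i xs = m i) :
    {x | ∀ y, (c : EReal) * ∑ i, g i x ≤ c * ∑ i, g i y} = {x | ∀ i, g i x = m i} := by
  ext x
  simp only [Set.mem_ofPred_eq, EReal.coe_mul_le_coe_mul_iff hc]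
  refine ⟨fun hx => EReal.eq_coe_of_sum_le_sum_coe (hm · x) ?_, fun hx y => ?_⟩
  · simpa only [hxs] using hx xs
  · simpa only [hx] using sum_le_sum fun i _ => hm i y

lemma iInf_coe_mul_sum_eq (hc : 0 < c) (hm : ∀ i z, (m i : EReal) ≤ g i z)
    (hxs : ∀ i, g i xs = m i) :
    ⨅ x, (c : EReal) * ∑ i, g i x = c * ∑ i, (m i : EReal) := by
  refine le_antisymm (iInf_le_of_le xs (by simp only [hxs, le_refl])) (le_iInf fun x => ?_)
  exact (EReal.coe_mul_le_coe_mul_iff hc).2 (sum_le_sum fun i _ => hm i x)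

end CommonMinimizer

section MoreauEnvelope

variable {d : ℕ} {γ : ℝ} {f : EuclideanSpace ℝ (Fin d) → EReal} {x : EuclideanSpace ℝ (Fin d)}

lemma moreauE_le_self : moreauE γ f x ≤ f x :=
  iInf_le_of_le x (by simp)

lemma le_moreauE (hγ : 0 ≤ γ) {m : EReal} (hm : ∀ z, m ≤ f z) : m ≤ moreauE γ f x :=
  le_iInf fun z => (hm z).trans (le_add_of_nonneg_right (EReal.coe_nonneg.2 (by positivity)))

lemma eq_of_moreauE_le (hγ : 0 < γ) (hf : LowerSemicontinuous f) {m : ℝ}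
    (hm : ∀ z, (m : EReal) ≤ f z) (hx : moreauE γ f x ≤ m) : f x = m := by
  refine le_antisymm ?_ (hm x)
  by_contra! h
  obtain ⟨y, hmy, hyx⟩ := EReal.exists_between_coe_real h
  obtain ⟨ε, hε, hball⟩ := Metric.eventually_nhds_iff.1 (hf x y hyx)
  set c : ℝ := min y (m + 1 / (2 * γ) * ε ^ 2)
  have hmc : m < c := lt_min (EReal.coe_lt_coe_iff.1 hmy) (lt_add_of_pos_right _ (by positivity))
  have hc : (c : EReal) ≤ moreauE γ f x := by
    refine le_iInf fun z => ?_
    rcases lt_or_ge (dist z x) ε with hz | hz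
    · calc (c : EReal) ≤ y := EReal.coe_le_coe_iff.2 (min_le_left _ _)
        _ ≤ f z := (hball hz).le
        _ ≤ _ := le_add_of_nonneg_right (EReal.coe_nonneg.2 (by positivity))
    · rw [dist_eq_norm] at hz
      have hpen : 1 / (2 * γ) * ε ^ 2 ≤ 1 / (2 * γ) * ‖z - x‖ ^ 2 := by gcongr
      calc (c : EReal) ≤ ((m + 1 / (2 * γ) * ε ^ 2 : ℝ) : EReal) :=
            EReal.coe_le_coe_iff.2 (min_le_right _ _)
        _ = m + ((1 / (2 * γ) * ε ^ 2 : ℝ) : EReal) := EReal.coe_add _ _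
        _ ≤ _ := add_le_add (hm z) (EReal.coe_le_coe_iff.2 hpen)
  exact hmc.not_ge (EReal.coe_le_coe_iff.1 (hc.trans hx))

lemma moreauE_eq_coe_iff (hγ : 0 < γ) (hf : LowerSemicontinuous f) {m : ℝ}
    (hm : ∀ z, (m : EReal) ≤ f z) : moreauE γ f x = m ↔ f x = m :=
  ⟨fun h => eq_of_moreauE_le hγ hf hm h.le,
    fun h => le_antisymm (moreauE_le_self.trans h.le) (le_moreauE hγ.le hm)⟩

end MoreauEnvelope

theorem stmt7_general {d n : ℕ} (hn : 0 < n) (f : Fin n → EuclideanSpace ℝ (Fin d) → EReal)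
    (hproper : ∀ i, ∃ x, f i x ≠ ⊤) (hbot : ∀ i x, f i x ≠ ⊥)
    (hlsc : ∀ i, LowerSemicontinuous (f i))
    (hint : ∃ xs : EuclideanSpace ℝ (Fin d), ∀ i, ∀ y, f i xs ≤ f i y)
    (γ : ℝ) (hγ : 0 < γ) :
    {x | ∀ y, ((1 / (n : ℝ) : ℝ) : EReal) * ∑ i, f i x ≤
              ((1 / (n : ℝ) : ℝ) : EReal) * ∑ i, f i y} =
      {x | ∀ y, ((1 / (n : ℝ) : ℝ) : EReal) * ∑ i, moreauE γ (f i) x ≤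
                ((1 / (n : ℝ) : ℝ) : EReal) * ∑ i, moreauE γ (f i) y} ∧
    (⨅ x, ((1 / (n : ℝ) : ℝ) : EReal) * ∑ i, f i x) =
      ⨅ x, ((1 / (n : ℝ) : ℝ) : EReal) * ∑ i, moreauE γ (f i) x := by
  obtain ⟨xs, hxs⟩ := hint
  have hfin : ∀ i, f i xs = ((f i xs).toReal : EReal) := fun i =>
    have ⟨z, hz⟩ := hproper i
    (EReal.coe_toReal (ne_top_of_le_ne_top hz (hxs i z)) (hbot i xs)).symm
  have hmf : ∀ i z, ((f i xs).toReal : EReal) ≤ f i z := fun i z => hfin i ▸ hxs i z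
  have hmM : ∀ i z, ((f i xs).toReal : EReal) ≤ moreauE γ (f i) z := fun i z =>
    le_moreauE hγ.le (hmf i)
  have hMxs : ∀ i, moreauE γ (f i) xs = (f i xs).toReal := fun i =>
    (moreauE_eq_coe_iff hγ (hlsc i) (hmf i)).2 (hfin i)
  have hc : 0 < 1 / (n : ℝ) := by positivity
  rw [setOf_forall_coe_mul_sum_le_eq hc hmf hfin, setOf_forall_coe_mul_sum_le_eq hc hmM hMxs,
    iInf_coe_mul_sum_eq hc hmf hfin, iInf_coe_mul_sum_eq hc hmM hMxs]
  simp only [moreauE_eq_coe_iff hγ (hlsc _) (hmf _), and_true]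

/-- For proper, closed, convex `f₁, ..., fₙ : ℝ^d → ℝ ∪ {+∞}` in the interpolation regime
(there is a common minimizer `x⋆` of all `fᵢ`), for any `0 < γ < ∞` the functions
`f = (1/n)∑ᵢ fᵢ` and `M^γ = (1/n)∑ᵢ M_{fᵢ}^γ` have the same set of minimizers and the same
minimum value. -/
theorem stmt7 {d n : ℕ} (hn : 0 < n) (f : Fin n → EuclideanSpace ℝ (Fin d) → EReal)
    (hproper : ∀ i, ∃ x, f i x ≠ ⊤) (hbot : ∀ i x, f i x ≠ ⊥)
    (hconv : ∀ i, ∀ x y : EuclideanSpace ℝ (Fin d), ∀ a b : ℝ, 0 ≤ a → 0 ≤ b → a + b = 1 →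
      f i (a • x + b • y) ≤ (a : EReal) * f i x + (b : EReal) * f i y)
    (hlsc : ∀ i, LowerSemicontinuous (f i))
    (hint : ∃ xs : EuclideanSpace ℝ (Fin d), ∀ i, ∀ y, f i xs ≤ f i y)
    (γ : ℝ) (hγ : 0 < γ) :
    {x | ∀ y, ((1 / (n : ℝ) : ℝ) : EReal) * ∑ i, f i x ≤
              ((1 / (n : ℝ) : ℝ) : EReal) * ∑ i, f i y} =
      {x | ∀ y, ((1 / (n : ℝ) : ℝ) : EReal) * ∑ i, moreauE γ (f i) x ≤
                ((1 / (n : ℝ) : ℝ) : EReal) * ∑ i, moreauE γ (f i) y} ∧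
    (⨅ x, ((1 / (n : ℝ) : ℝ) : EReal) * ∑ i, f i x) =
      ⨅ x, ((1 / (n : ℝ) : ℝ) : EReal) * ∑ i, moreauE γ (f i) x :=
  stmt7_general hn f hproper hbot hlsc hint γ hγ
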